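/- Let T: M_ℓ(ℂ) → M_ℓ(ℂ) be the elementary operator Tx = Σⱼ aⱼ x bⱼ where aⱼ = η ⊗ ξⱼ* and bⱼ = ηⱼ ⊗ η* are rank-one operators built from a fixed unit vector η ∈ ℂ^ℓ and vectors ξⱼ, ηⱼ ∈ ℂ^ℓ. Then the operator norm of T equals tgm(X, Y), where X = (⟨ξⱼ, ξᵢ⟩)ᵢⱼ and Y = (⟨ηᵢ, ηⱼ⟩)ᵢⱼᵗ are the associated Gram-type matrices Q(a*, η) and Q(b, η). -/

import Mathlib

open Matrix
open scoped ComplexOrder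

/-- The square root of a positive semidefinite matrix, as defined in Mathlib (Dec 2024)
under the same name `Matrix.PosSemidef.sqrt` (removed since). -/
noncomputable def Matrix.PosSemidef.sqrt {n 𝕜 : Type*} [Fintype n] [DecidableEq n] [RCLike 𝕜]
    {A : Matrix n n 𝕜} (hA : A.PosSemidef) : Matrix n n 𝕜 :=
  hA.1.eigenvectorUnitary.1 * diagonal ((↑) ∘ (fun x : ℝ => √x) ∘ hA.1.eigenvalues) *
  (star hA.1.eigenvectorUnitary : Matrix n n 𝕜)

theorem Matrix.PosSemidef.posSemidef_sqrt {n 𝕜 : Type*} [Fintype n] [DecidableEq n] [RCLike 𝕜]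
    {A : Matrix n n 𝕜} (hA : A.PosSemidef) : hA.sqrt.PosSemidef := by
  have hd : (diagonal ((↑) ∘ (fun x : ℝ => √x) ∘ hA.1.eigenvalues) : Matrix n n 𝕜).PosSemidef :=
    Matrix.PosSemidef.diagonal (fun i => by
      simp only [Function.comp_apply]
      exact RCLike.ofReal_nonneg.mpr (Real.sqrt_nonneg _))
  have := hd.mul_mul_conjTranspose_same (hA.1.eigenvectorUnitary.1)
  simpa [Matrix.PosSemidef.sqrt, Matrix.star_eq_conjTranspose] using this

/-- The product `√X * Y * √X` is positive semidefinite. -/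
theorem sqrt_mul_mul_sqrt_posSemidef {n : Type*} [Fintype n] [DecidableEq n]
    {X Y : Matrix n n ℂ} (hX : X.PosSemidef) (hY : Y.PosSemidef) :
    (hX.sqrt * Y * hX.sqrt).PosSemidef := by
  have h := hY.conjTranspose_mul_mul_same (B := hX.sqrt)
  rwa [hX.posSemidef_sqrt.isHermitian.eq] at h

/-- The tracial geometric mean `tgm(X,Y) = trace √(√X·Y·√X)`. -/
noncomputable def tgm {n : Type*} [Fintype n] [DecidableEq n]
    {X Y : Matrix n n ℂ} (hX : X.PosSemidef) (hY : Y.PosSemidef) : ℝ :=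
  ((sqrt_mul_mul_sqrt_posSemidef hX hY).sqrt.trace).re

/-!
Each summand of `T x` is the rank-one map `u ↦ ⟪η, u⟫ ⟪ξⱼ, x ζⱼ⟫ η`, so `T x = φ x • (η ⊗ η*)`
with `φ x = Σⱼ ⟪ξⱼ, x ζⱼ⟫ = tr (x A)`, `A = Σⱼ ζⱼ ⊗ ξⱼ*`; hence `‖T‖` is the trace norm of `A`.
Expanding `φ` in an eigenbasis `vᵢ` of `A A* = Z X Zᴴ` (`Z` has columns `ζⱼ`) gives
`φ x = Σᵢ ⟪wᵢ, x vᵢ⟫` with `wᵢ = A* vᵢ` pairwise orthogonal and `‖wᵢ‖ = √μᵢ`. Cauchy–Schwarz bounds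
`‖φ x‖` by `Σᵢ ‖wᵢ‖`, and the partial isometry `vᵢ ↦ wᵢ / ‖wᵢ‖` attains the bound. Finally
`Z X Zᴴ = (Z √X) (Z √X)ᴴ` and `√X Y √X = (Z √X)ᴴ (Z √X)` have the same characteristic polynomial,
so `Σᵢ √μᵢ = tr √(√X Y √X)`.
-/

namespace Matrix.PosSemidef

variable {n 𝕜 : Type*} [Fintype n] [DecidableEq n] [RCLike 𝕜] {A : Matrix n n 𝕜}

theorem sqrt_mul_self (hA : A.PosSemidef) : hA.sqrt * hA.sqrt = A := by
  set U : Matrix n n 𝕜 := (hA.1.eigenvectorUnitary : Matrix n n 𝕜)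
  set D : Matrix n n 𝕜 := diagonal ((↑) ∘ (fun x : ℝ => √x) ∘ hA.1.eigenvalues)
  have hU : star U * U = 1 := Unitary.coe_star_mul_self _
  have hD : D * D = diagonal (RCLike.ofReal ∘ hA.1.eigenvalues) := by
    rw [diagonal_mul_diagonal]
    congr 1
    funext i
    simp [← RCLike.ofReal_mul, Real.mul_self_sqrt (hA.eigenvalues_nonneg i)]
  calc hA.sqrt * hA.sqrt = U * (D * D) * star U := by
        simp only [Matrix.PosSemidef.sqrt, U, D, Matrix.mul_assoc]
        rw [← Matrix.mul_assoc (star U), hU, Matrix.one_mul]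
    _ = A := by
        rw [hD]
        exact (Unitary.conjStarAlgAut_apply _ _).symm.trans hA.1.spectral_theorem.symm

theorem trace_sqrt (hA : A.PosSemidef) :
    hA.sqrt.trace = ∑ i, (√(hA.1.eigenvalues i) : 𝕜) := by
  rw [Matrix.PosSemidef.sqrt, trace_mul_cycle, Matrix.mul_assoc, ← Matrix.mul_assoc,
    Unitary.coe_star_mul_self, Matrix.one_mul, trace_diagonal]
  rfl

theorem charpoly_mul_mul_conjTranspose (hA : A.PosSemidef) (Z : Matrix n n 𝕜) :
    (Z * A * Zᴴ).charpoly = (hA.sqrt * (Zᴴ * Z) * hA.sqrt).charpoly := by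
  calc (Z * A * Zᴴ).charpoly = ((Z * hA.sqrt) * (hA.sqrt * Zᴴ)).charpoly := by
        conv_lhs => rw [← hA.sqrt_mul_self]
        simp only [Matrix.mul_assoc]
    _ = ((hA.sqrt * Zᴴ) * (Z * hA.sqrt)).charpoly := charpoly_mul_comm _ _
    _ = _ := by simp only [Matrix.mul_assoc]

end Matrix.PosSemidef

theorem tgm_eq_sum_sqrt_eigenvalues {n : Type*} [Fintype n] [DecidableEq n]
    {X Y : Matrix n n ℂ} (hX : X.PosSemidef) (hY : Y.PosSemidef) :
    tgm hX hY = ∑ i, √((sqrt_mul_mul_sqrt_posSemidef hX hY).1.eigenvalues i) := by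
  rw [tgm, Matrix.PosSemidef.trace_sqrt, Complex.re_sum]
  simp

theorem Matrix.IsHermitian.star_dotProduct_mulVec_eigenvectorBasis {n 𝕜 : Type*} [Fintype n]
    [DecidableEq n] [RCLike 𝕜] {A : Matrix n n 𝕜} (hA : A.IsHermitian) (i k : n) :
    star ⇑(hA.eigenvectorBasis i) ⬝ᵥ A *ᵥ ⇑(hA.eigenvectorBasis k) =
      if i = k then (hA.eigenvalues k : 𝕜) else 0 := by
  rw [hA.mulVec_eigenvectorBasis, dotProduct_smul, dotProduct_comm,
    ← EuclideanSpace.inner_eq_star_dotProduct, hA.eigenvectorBasis.inner_eq_ite]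
  split_ifs <;> simp [RCLike.real_smul_eq_coe_mul]

section InnerProductSpace

variable {𝕜 E ι : Type*} [RCLike 𝕜] [NormedAddCommGroup E] [InnerProductSpace 𝕜 E] [Fintype ι]

local notation "⟪" x ", " y "⟫" => inner 𝕜 x y

theorem sum_smulRight_comp_comp_smulRight (η : E) (ξ ζ : ι → E) (x : E →L[𝕜] E) :
    ∑ j, ((innerSL 𝕜 (ξ j)).smulRight η).comp (x.comp ((innerSL 𝕜 η).smulRight (ζ j))) =
      (∑ j, ⟪ξ j, x (ζ j)⟫) • (innerSL 𝕜 η).smulRight η := by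
  ext u
  simp only [FunLike.coe_sum, Finset.sum_apply, ContinuousLinearMap.comp_apply,
    ContinuousLinearMap.smulRight_apply, innerSL_apply_apply, map_smul, smul_smul,
    FunLike.coe_smul, Pi.smul_apply, Finset.sum_smul, mul_comm]

theorem norm_sum_sq_of_pairwise_inner_eq_zero {u : ι → E}
    (hu : Pairwise fun i j => ⟪u i, u j⟫ = 0) : ‖∑ i, u i‖ ^ 2 = ∑ i, ‖u i‖ ^ 2 := by
  classical
  induction (Finset.univ : Finset ι) using Finset.induction_on with
  | empty => simp
  | insert a s ha ih =>
    have h : ⟪u a, ∑ i ∈ s, u i⟫ = 0 := by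
      rw [inner_sum]
      exact Finset.sum_eq_zero fun i hi => hu (ne_of_mem_of_not_mem hi ha).symm
    rw [Finset.sum_insert ha, Finset.sum_insert ha, ← ih, sq, sq, sq,
      norm_add_sq_eq_norm_sq_add_norm_sq_of_inner_eq_zero _ _ h]

namespace OrthonormalBasis

variable (v : OrthonormalBasis ι 𝕜 E)

theorem sum_inner_apply_eq {κ : Type*} [Fintype κ] (ξ ζ : κ → E) (x : E →L[𝕜] E) :
    ∑ j, ⟪ξ j, x (ζ j)⟫ = ∑ i, ⟪∑ j, ⟪ζ j, v i⟫ • ξ j, x (v i)⟫ := by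
  calc ∑ j, ⟪ξ j, x (ζ j)⟫ = ∑ j, ∑ i, ⟪v i, ζ j⟫ * ⟪ξ j, x (v i)⟫ := by
        refine Finset.sum_congr rfl fun j _ => ?_
        conv_lhs => rw [← v.sum_repr' (ζ j)]
        simp only [map_sum, map_smul, inner_sum, inner_smul_right]
    _ = _ := by
        rw [Finset.sum_comm]
        simp only [sum_inner, inner_smul_left, inner_conj_symm]

theorem norm_sum_inner_apply_le (w : ι → E) {x : E →L[𝕜] E} (hx : ‖x‖ ≤ 1) :
    ‖∑ i, ⟪w i, x (v i)⟫‖ ≤ ∑ i, ‖w i‖ := by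
  refine (norm_sum_le _ _).trans (Finset.sum_le_sum fun i _ => ?_)
  calc ‖⟪w i, x (v i)⟫‖ ≤ ‖w i‖ * ‖x (v i)‖ := norm_inner_le_norm _ _
    _ ≤ ‖w i‖ * 1 := by gcongr; simpa using x.le_of_opNorm_le hx (v i)
    _ = ‖w i‖ := mul_one _

theorem sum_smulRight_apply [DecidableEq ι] (u : ι → E) (k : ι) :
    (∑ i, (innerSL 𝕜 (v i)).smulRight (u i)) (v k) = u k := by
  simp [v.inner_eq_ite]

theorem norm_sum_smulRight_le_one {u : ι → E} (hu : Pairwise fun i j => ⟪u i, u j⟫ = 0)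
    (hu1 : ∀ i, ‖u i‖ ≤ 1) : ‖∑ i, (innerSL 𝕜 (v i)).smulRight (u i)‖ ≤ 1 := by
  refine ContinuousLinearMap.opNorm_le_bound _ zero_le_one fun y => ?_
  have hcu : Pairwise fun i j => ⟪⟪v i, y⟫ • u i, ⟪v j, y⟫ • u j⟫ = 0 := fun i j hij => by
    simp [inner_smul_left, inner_smul_right, hu hij]
  have h : ‖(∑ i, (innerSL 𝕜 (v i)).smulRight (u i)) y‖ ^ 2 ≤ ‖y‖ ^ 2 :=
    calc _ = ‖∑ i, ⟪v i, y⟫ • u i‖ ^ 2 := by simp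
      _ = ∑ i, ‖⟪v i, y⟫‖ ^ 2 * ‖u i‖ ^ 2 := by
          simp only [norm_sum_sq_of_pairwise_inner_eq_zero hcu, norm_smul, mul_pow]
      _ ≤ ∑ i, ‖⟪v i, y⟫‖ ^ 2 := by
          gcongr with i
          exact mul_le_of_le_one_right (by positivity) (pow_le_one₀ (norm_nonneg _) (hu1 i))
      _ = ‖y‖ ^ 2 := v.sum_sq_norm_inner_right y
  rw [one_mul]
  exact (pow_le_pow_iff_left₀ (norm_nonneg _) (norm_nonneg _) two_ne_zero).mp h

theorem isGreatest_norm_sum_inner_apply {w : ι → E} (hw : Pairwise fun i j => ⟪w i, w j⟫ = 0) :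
    IsGreatest {r : ℝ | ∃ x : E →L[𝕜] E, ‖x‖ ≤ 1 ∧ r = ‖∑ i, ⟪w i, x (v i)⟫‖} (∑ i, ‖w i‖) := by
  classical
  refine ⟨?_, fun r ⟨x, hx, hr⟩ => hr ▸ v.norm_sum_inner_apply_le w hx⟩
  set u := fun i => ((‖w i‖⁻¹ : ℝ) : 𝕜) • w i
  have hu : Pairwise fun i j => ⟪u i, u j⟫ = 0 := fun i j hij => by
    simp [u, inner_smul_left, inner_smul_right, hw hij]
  have hu1 : ∀ i, ‖u i‖ ≤ 1 := fun i => by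
    rw [norm_smul, RCLike.norm_ofReal, abs_inv, abs_norm]
    exact inv_mul_le_one_of_le₀ le_rfl (norm_nonneg _)
  have hwu : ∀ i, ⟪w i, u i⟫ = (‖w i‖ : 𝕜) := fun i => by
    rcases eq_or_ne ‖w i‖ 0 with h | h
    · simp [u, norm_eq_zero.mp h]
    · rw [inner_smul_right, inner_self_eq_norm_sq_to_K, ← RCLike.ofReal_pow, ← RCLike.ofReal_mul]
      field_simp
  refine ⟨_, v.norm_sum_smulRight_le_one hu hu1, ?_⟩
  simp only [v.sum_smulRight_apply, hwu]
  rw [← RCLike.ofReal_sum, RCLike.norm_ofReal, abs_of_nonneg (by positivity)]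

end OrthonormalBasis

end InnerProductSpace

section EuclideanSpace

variable {𝕜 n ι : Type*} [RCLike 𝕜] [Fintype n]

local notation "⟪" x ", " y "⟫" => inner 𝕜 x y

def columnMatrix (ζ : ι → EuclideanSpace 𝕜 n) : Matrix n ι 𝕜 :=
  Matrix.of fun i j => ζ j i

theorem gram_eq_conjTranspose_columnMatrix_mul (ζ : ι → EuclideanSpace 𝕜 n) :
    Matrix.gram 𝕜 ζ = (columnMatrix ζ)ᴴ * columnMatrix ζ := by
  ext i j
  simp [columnMatrix, Matrix.mul_apply, PiLp.inner_apply, mul_comm]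

theorem conjTranspose_columnMatrix_mulVec (ζ : ι → EuclideanSpace 𝕜 n) (a : EuclideanSpace 𝕜 n) :
    (columnMatrix ζ)ᴴ *ᵥ ⇑a = fun j => ⟪ζ j, a⟫ := by
  ext j
  simp [columnMatrix, Matrix.mulVec, dotProduct, PiLp.inner_apply, mul_comm]

variable [Fintype ι] {E : Type*} [NormedAddCommGroup E] [InnerProductSpace 𝕜 E]

theorem inner_sum_inner_smul_eq_star_dotProduct_mulVec (ξ : ι → E) (ζ : ι → EuclideanSpace 𝕜 n)
    (a b : EuclideanSpace 𝕜 n) :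
    ⟪∑ j, ⟪ζ j, a⟫ • ξ j, ∑ j, ⟪ζ j, b⟫ • ξ j⟫ =
      star ⇑a ⬝ᵥ (columnMatrix ζ * Matrix.gram 𝕜 ξ * (columnMatrix ζ)ᴴ) *ᵥ ⇑b := by
  rw [← star_dotProduct_gram_mulVec, ← conjTranspose_columnMatrix_mulVec ζ a,
    ← conjTranspose_columnMatrix_mulVec ζ b, Matrix.star_mulVec,
    Matrix.conjTranspose_conjTranspose, ← Matrix.dotProduct_mulVec, Matrix.mulVec_mulVec,
    Matrix.mulVec_mulVec]

theorem inner_sum_inner_eigenvectorBasis_smul [DecidableEq n] (ξ : ι → E)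
    (ζ : ι → EuclideanSpace 𝕜 n)
    (hP : (columnMatrix ζ * Matrix.gram 𝕜 ξ * (columnMatrix ζ)ᴴ).IsHermitian) (i k : n) :
    ⟪∑ j, ⟪ζ j, hP.eigenvectorBasis i⟫ • ξ j, ∑ j, ⟪ζ j, hP.eigenvectorBasis k⟫ • ξ j⟫ =
      if i = k then (hP.eigenvalues k : 𝕜) else 0 := by
  rw [inner_sum_inner_smul_eq_star_dotProduct_mulVec,
    hP.star_dotProduct_mulVec_eigenvectorBasis]

end EuclideanSpace

/-- For the elementary operator `Tx = Σⱼ aⱼ x bⱼ` on `M_ℓ(ℂ)` (acting on `ℂ^ℓ` as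
`EuclideanSpace ℂ (Fin ℓ)`) built from rank-one operators `aⱼ = η ⊗ ξⱼ*` and
`bⱼ = ηⱼ ⊗ η*` with `‖η‖ = 1`, the operator norm of `T` equals `tgm(X, Y)`, where
`X = Q(a*, η) = (⟨ξⱼ, ξᵢ⟩)ᵢⱼ` and `Y = Q(b, η) = (⟨ηᵢ, ηⱼ⟩)ᵢⱼᵗ`. -/
theorem norm_rankOne_elementary_eq_tgm {ℓ : ℕ}
    (η : EuclideanSpace ℂ (Fin ℓ)) (hη : ‖η‖ = 1)
    (ξ ζ : Fin ℓ → EuclideanSpace ℂ (Fin ℓ))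
    {X Y : Matrix (Fin ℓ) (Fin ℓ) ℂ}
    (hXeq : X = Matrix.of fun i j => (inner ℂ (ξ i) (ξ j) : ℂ))
    (hYeq : Y = Matrix.of fun i j => (inner ℂ (ζ i) (ζ j) : ℂ))
    (hX : X.PosSemidef) (hY : Y.PosSemidef) :
    sSup {r : ℝ | ∃ x : EuclideanSpace ℂ (Fin ℓ) →L[ℂ] EuclideanSpace ℂ (Fin ℓ),
        ‖x‖ ≤ 1 ∧ r = ‖∑ j, (((innerSL ℂ (ξ j)).smulRight η).comp
          (x.comp ((innerSL ℂ η).smulRight (ζ j))))‖} = tgm hX hY := by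
  subst hXeq
  set Z := columnMatrix ζ
  have hP : (Z * Matrix.gram ℂ ξ * Zᴴ).IsHermitian := (hX.mul_mul_conjTranspose_same Z).1
  set v := hP.eigenvectorBasis
  set w := fun i => ∑ j, inner ℂ (ζ j) (v i) • ξ j
  have hw : ∀ i k, inner ℂ (w i) (w k) = if i = k then (hP.eigenvalues k : ℂ) else 0 :=
    inner_sum_inner_eigenvectorBasis_smul ξ ζ hP
  have hw_orth : Pairwise fun i k => inner ℂ (w i) (w k) = 0 := fun i k hik =>
    (hw i k).trans (if_neg hik)
  have hw_norm : ∀ i, ‖w i‖ = √(hP.eigenvalues i) := fun i => by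
    rw [norm_eq_sqrt_re_inner (𝕜 := ℂ), hw, if_pos rfl, RCLike.re_to_complex, Complex.ofReal_re]
  have heig : hP.eigenvalues = (sqrt_mul_mul_sqrt_posSemidef hX hY).1.eigenvalues := by
    rw [Matrix.IsHermitian.eigenvalues_eq_eigenvalues_iff,
      hYeq.trans (gram_eq_conjTranspose_columnMatrix_mul ζ)]
    exact hX.charpoly_mul_mul_conjTranspose Z
  have hset : {r : ℝ | ∃ x : EuclideanSpace ℂ (Fin ℓ) →L[ℂ] EuclideanSpace ℂ (Fin ℓ),
        ‖x‖ ≤ 1 ∧ r = ‖∑ j, (((innerSL ℂ (ξ j)).smulRight η).comp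
          (x.comp ((innerSL ℂ η).smulRight (ζ j))))‖} =
      {r : ℝ | ∃ x : EuclideanSpace ℂ (Fin ℓ) →L[ℂ] EuclideanSpace ℂ (Fin ℓ),
        ‖x‖ ≤ 1 ∧ r = ‖∑ i, inner ℂ (w i) (x (v i))‖} := by
    simp only [sum_smulRight_comp_comp_smulRight, norm_smul,
      ContinuousLinearMap.norm_smulRight_apply, innerSL_apply_norm, hη, mul_one,
      v.sum_inner_apply_eq ξ ζ]
    rfl
  rw [hset, (v.isGreatest_norm_sum_inner_apply hw_orth).csSup_eq, tgm_eq_sum_sqrt_eigenvalues,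
    ← heig]
  simp only [hw_norm]
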